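/- Let 1 ≤ m ≤ n, x_m ∈ X_m, and (y₁,…,y_m,ξ) ∈ Y^m × X_{n−m} such that π_{m,n−m}(y₁,…,y_m,ξ) = φ_{n,m}(x_m). Then ξ ∈ φ_{n−m,0}(X₀). -/

import Mathlib

set_option linter.unusedSectionVars false
set_option linter.unusedVariables false

variable {Y : Type}

/-- Iterated embedding φ_{n,m} : X m → X n for m ≤ n. -/
def phiTo (X : ℕ → Type) (φs : ∀ n, X n → X (n + 1)) {m n : ℕ} (h : m ≤ n) (x : X m) : X n :=
  Nat.leRecOn h (fun {k} x => φs k x) x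

/-- Iterated projection π_{m,q} : Yᵐ × X q → X (q+m), the head of the word acting outermost. -/
def piFin (X : ℕ → Type) (πo : ∀ n, Y → X n → X (n + 1)) :
    ∀ (m q : ℕ), (Fin m → Y) → X q → X (q + m)
  | 0, _, _, x => x
  | m + 1, q, y, x => πo (q + m) (y 0) (piFin X πo m q (fun i => y i.succ) x)

/-- Iterated projection π_{m,0} : Yᵐ × X 0 → X m. -/
def piFin0 (X : ℕ → Type) (πo : ∀ n, Y → X n → X (n + 1)) :
    ∀ (m : ℕ), (Fin m → Y) → X 0 → X m
  | 0, _, x => x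
  | m + 1, y, x => πo m (y 0) (piFin0 X πo m (fun i => y i.succ) x)

/-- The set Γ_n(x_n) ⊂ Y^ℕ : all infinite addresses y such that for every p ≥ n the point
φ_{p,n}(x_n) lies in the cell C(y₁,…,y_p) = π_{p,0}({(y₁,…,y_p)} × X 0). -/
def Gamma (X : ℕ → Type) (φs : ∀ n, X n → X (n + 1)) (πo : ∀ n, Y → X n → X (n + 1))
    (n : ℕ) (xn : X n) : Set (ℕ → Y) :=
  { y | ∀ p, ∀ h : n ≤ p, ∃ x0 : X 0, phiTo X φs h xn = piFin0 X πo p (fun i : Fin p => y i.1) x0 }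

/-- The relation R on Y^ℕ: related iff equal or both in some Γ_n(x_n). -/
def simRel (X : ℕ → Type) (φs : ∀ n, X n → X (n + 1)) (πo : ∀ n, Y → X n → X (n + 1)) :
    (ℕ → Y) → (ℕ → Y) → Prop :=
  fun a b => a = b ∨ ∃ n, ∃ xn : X n, a ∈ Gamma X φs πo n xn ∧ b ∈ Gamma X φs πo n xn

variable {X : ℕ → Type}
  [TopologicalSpace Y] [CompactSpace Y] [T2Space Y]
  [∀ n, TopologicalSpace (X n)] [∀ n, CompactSpace (X n)] [∀ n, T2Space (X n)]

/-! Descend one level at a time: write the embedded point `x ∈ X (j+1)` as `πo j y' x'`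
and push the embedding through `πo` with `hcomm`. Then `πo n y ξ = πo n y' (φ x')`, so
either `ξ = φ x'` outright, or the two preimages differ and `hquot` puts `ξ` in the image
of `X 0`. After `m` steps the argument of `piFin` is reached. -/

section IteratedMaps

-- Fresh `Y` and `X`, so that the topological instances above are not included.
variable {Y : Type} {X : ℕ → Type}
  (φs : ∀ n, X n → X (n + 1)) (πo : ∀ n, Y → X n → X (n + 1))

theorem phiTo_self {n : ℕ} (h : n ≤ n) (x : X n) : phiTo X φs h x = x :=
  Nat.leRecOn_self x

theorem phiTo_succ {m n : ℕ} (h : m ≤ n) (x : X m) :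
    phiTo X φs (h.trans n.le_succ) x = φs n (phiTo X φs h x) :=
  Nat.leRecOn_succ h x

theorem phiTo_trans {k m n : ℕ} (hkm : k ≤ m) (hmn : m ≤ n) (x : X k) :
    phiTo X φs (hkm.trans hmn) x = phiTo X φs hmn (phiTo X φs hkm x) :=
  Nat.leRecOn_trans hkm hmn x

theorem πo_phiTo
    (hcomm : ∀ (n : ℕ) (y : Y) (x : X n), πo (n + 1) y (φs n x) = φs (n + 1) (πo n y x))
    {n p : ℕ} (h : n ≤ p) (y : Y) (x : X n) :
    πo p y (phiTo X φs h x) = phiTo X φs (Nat.succ_le_succ h) (πo n y x) := by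
  induction h with
  | refl => rw [phiTo_self, phiTo_self]
  | @step p h ih => rw [phiTo_succ φs h, hcomm, ih, ← phiTo_succ φs (Nat.succ_le_succ h)]

theorem exists_phiTo_of_πo_eq_phiTo
    (hπs : ∀ n, Function.Surjective fun p : Y × X n => πo n p.1 p.2)
    (hcomm : ∀ (n : ℕ) (y : Y) (x : X n), πo (n + 1) y (φs n x) = φs (n + 1) (πo n y x))
    (hquot : ∀ (n : ℕ) (y y' : Y) (ξ ξ' : X n), πo n y ξ = πo n y' ξ' → (y, ξ) ≠ (y', ξ') →
      ∃ x0 x0' : X 0, ξ = phiTo X φs (Nat.zero_le n) x0 ∧ ξ' = phiTo X φs (Nat.zero_le n) x0' ∧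
        πo 0 y x0 = πo 0 y' x0')
    {j n : ℕ} (hjn : j ≤ n) {y : Y} {ξ : X n} {x : X (j + 1)}
    (h : πo n y ξ = phiTo X φs (Nat.succ_le_succ hjn) x) :
    ∃ x' : X j, ξ = phiTo X φs hjn x' := by
  obtain ⟨⟨y', x'⟩, rfl⟩ := hπs j x
  replace h : πo n y ξ = πo n y' (phiTo X φs hjn x') :=
    h.trans (πo_phiTo φs πo hcomm hjn y' x').symm
  by_cases hpair : (y, ξ) = (y', phiTo X φs hjn x')
  · exact ⟨x', congrArg Prod.snd hpair⟩
  · obtain ⟨a, -, rfl, -, -⟩ := hquot n _ _ _ _ h hpair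
    exact ⟨phiTo X φs (Nat.zero_le j) a, phiTo_trans φs (Nat.zero_le j) hjn a⟩

theorem exists_phiTo_zero_of_piFin_eq_phiTo
    (hπs : ∀ n, Function.Surjective fun p : Y × X n => πo n p.1 p.2)
    (hcomm : ∀ (n : ℕ) (y : Y) (x : X n), πo (n + 1) y (φs n x) = φs (n + 1) (πo n y x))
    (hquot : ∀ (n : ℕ) (y y' : Y) (ξ ξ' : X n), πo n y ξ = πo n y' ξ' → (y, ξ) ≠ (y', ξ') →
      ∃ x0 x0' : X 0, ξ = phiTo X φs (Nat.zero_le n) x0 ∧ ξ' = phiTo X φs (Nat.zero_le n) x0' ∧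
        πo 0 y x0 = πo 0 y' x0') :
    ∀ (m q : ℕ) (y : Fin m → Y) (ξ : X q) (x : X m) (hmq : m ≤ q + m),
      piFin X πo m q y ξ = phiTo X φs hmq x → ∃ z : X 0, ξ = phiTo X φs (Nat.zero_le q) z
  | 0, _, _, _, x, _, h => ⟨x, h⟩
  | m + 1, q, y, ξ, _, _, h => by
    obtain ⟨x', hx'⟩ :=
      exists_phiTo_of_πo_eq_phiTo φs πo hπs hcomm hquot (Nat.le_add_left m q) h
    exact exists_phiTo_zero_of_piFin_eq_phiTo hπs hcomm hquot m q _ ξ x' _ hx'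

end IteratedMaps

theorem statement_5
    (φs : ∀ n, X n → X (n + 1)) (πo : ∀ n, Y → X n → X (n + 1))
    (hπs : ∀ n, Function.Surjective fun p : Y × X n => πo n p.1 p.2)
    (hcomm : ∀ (n : ℕ) (y : Y) (x : X n), πo (n + 1) y (φs n x) = φs (n + 1) (πo n y x))
    (hquot : ∀ (n : ℕ) (y y' : Y) (ξ ξ' : X n), πo n y ξ = πo n y' ξ' → (y, ξ) ≠ (y', ξ') →
      ∃ x0 x0' : X 0, ξ = phiTo X φs (Nat.zero_le n) x0 ∧ ξ' = phiTo X φs (Nat.zero_le n) x0' ∧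
        πo 0 y x0 = πo 0 y' x0')
    (m q : ℕ) (xm : X m) (y : Fin m → Y) (ξ : X q)
    (h : piFin X πo m q y ξ = phiTo X φs (show m ≤ q + m by omega) xm) :
    ∃ z : X 0, ξ = phiTo X φs (Nat.zero_le q) z :=
  exists_phiTo_zero_of_piFin_eq_phiTo φs πo hπs hcomm hquot m q y ξ xm _ h
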